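/- With H = FreeAlgebra k ℕ+, Δ, ε, δ_n and α_n as in the context, define ∂_-(1) := 1 and ∂_-(n) := n−1 for n ≥ 2. Then for all positive integers r, s (equal or not), the product α_r·α_s satisfies δ_{∂_-(r)+∂_-(s)+1}(α_r·α_s) = 0 and δ_{∂_-(r)+∂_-(s)}(α_r·α_s) ≠ 0. (In particular, for r, s ≥ 2: δ_{r+s−1}(α_r α_s) = 0 while δ_{r+s−2}(α_r α_s) ≠ 0.) -/

import Mathlib

open scoped TensorProduct
noncomputable section

universe u
variable (k : Type u) [Field k] [CharZero k]

/-- `H = FreeAlgebra k ℕ+`, the free associative `k`-algebra on `a_1, a_2, a_3, …`. -/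
abbrev HA := FreeAlgebra k ℕ+

/-- The generator `a_n` for `n : ℕ+`. -/
def ag (n : ℕ+) : HA k := FreeAlgebra.ι k n

/-- The generator `a_n` for `n : ℕ` with `n ≥ 1` (and `1` for `n = 0`, never used). -/
def ag' (n : ℕ) : HA k := if h : 0 < n then ag k ⟨n, h⟩ else 1

/-- `P_t^{(s)}(a_*) := Σ_{j_1+⋯+j_s = t, j_i ≥ 1} a_{j_1}⋯a_{j_s}`. -/
def Pha (t s : ℕ) : HA k :=
  ∑ c ∈ Finset.univ.filter (fun c : Composition t => c.length = s),
    (c.blocks.map (ag' k)).prod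

/-- `Q_t^ℓ(a_*) := Σ_{s=1}^{t} binom(ℓ+1, s)·P_t^{(s)}(a_*)`. -/
def Qha (t l : ℕ) : HA k := ∑ s ∈ Finset.Icc 1 t, (l + 1).choose s • Pha k t s

/-- The coproduct `Δ : H → H ⊗ H`, the unique `k`-algebra homomorphism with
`Δ(a_n) = a_n⊗1 + 1⊗a_n + Σ_{m=1}^{n−1} a_m ⊗ Q^m_{n−m}(a_*)`. -/
def Dha : HA k →ₐ[k] (HA k ⊗[k] HA k) :=
  FreeAlgebra.lift k fun n : ℕ+ =>
    ag k n ⊗ₜ[k] 1 + 1 ⊗ₜ[k] ag k n +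
      ∑ m ∈ Finset.Icc 1 ((n : ℕ) - 1), ag' k m ⊗ₜ[k] Qha k ((n : ℕ) - m) m

/-- The counit `ε : H → k`, the `k`-algebra homomorphism with `ε(a_n) = 0`. -/
def Eha : HA k →ₐ[k] k := FreeAlgebra.lift k fun _ : ℕ+ => 0

/-- The `n`-fold tensor power `H^{⊗n}` over `k` (with `H^{⊗0} = k`). -/
def TpowH : ℕ → ModuleCat k
  | 0 => ModuleCat.of k k
  | n+1 => ModuleCat.of k (HA k ⊗[k] (TpowH n))

/-- The iterated coproducts `Δ^n : H → H^{⊗n}`, with `Δ^0 := ε`. -/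
def DeltaH : (n : ℕ) → (HA k →ₗ[k] TpowH k n)
  | 0 => (Eha k).toLinearMap
  | n+1 => (TensorProduct.map LinearMap.id (DeltaH n)) ∘ₗ (Dha k).toLinearMap

/-- `id - u ∘ ε : H → H`. -/
def projH : HA k →ₗ[k] HA k :=
  LinearMap.id - (Algebra.linearMap k (HA k)) ∘ₗ (Eha k).toLinearMap

/-- `(id - u∘ε)^{⊗n}`. -/
def projPowH : (n : ℕ) → (TpowH k n →ₗ[k] TpowH k n)
  | 0 => LinearMap.id
  | n+1 => TensorProduct.map (projH k) (projPowH n)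

/-- Drinfeld's maps `δ_n := (id - u∘ε)^{⊗n} ∘ Δ^n : H → H^{⊗n}` (`δ_0 = ε`). -/
def deltaH (n : ℕ) : HA k →ₗ[k] TpowH k n := projPowH k n ∘ₗ DeltaH k n

/-- `α_1 := a_1` and `α_n := a_n − a_1^n` for `n ≥ 2`. -/
def alphaE (n : ℕ+) : HA k := if n = 1 then ag k 1 else ag k n - (ag k 1) ^ (n : ℕ)

/-- The weight `∂_-`: `∂_-(1) := 1` and `∂_-(n) := n − 1` for `n ≥ 2`. -/
def dminus (n : ℕ+) : ℕ := if n = 1 then 1 else (n : ℕ) - 1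

section SectA
set_option linter.unusedSectionVars false
variable {k}

lemma Dha_ag (n : ℕ+) : Dha k (ag k n) = ag k n ⊗ₜ[k] 1 + 1 ⊗ₜ[k] ag k n +
    ∑ m ∈ Finset.Icc 1 ((n : ℕ) - 1), ag' k m ⊗ₜ[k] Qha k ((n : ℕ) - m) m := by
  simp [Dha, ag, FreeAlgebra.lift_ι_apply]

lemma Eha_ag (n : ℕ+) : Eha k (ag k n) = 0 := by
  simp [Eha, ag, FreeAlgebra.lift_ι_apply]

lemma ag'_eq {m : ℕ} (h : 0 < m) : ag' k m = ag k ⟨m, h⟩ := by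
  simp [ag', h]

lemma Pha_eq_zero {t s : ℕ} (h : t < s) : Pha k t s = 0 := by
  unfold Pha
  rw [Finset.filter_false_of_mem, Finset.sum_empty]
  intro c _
  have := c.length_le
  omega

lemma Pha_one {t : ℕ} (ht : 1 ≤ t) : Pha k t 1 = ag' k t := by
  unfold Pha
  have hc : Finset.univ.filter (fun c : Composition t => c.length = 1)
      = {(⟨[t], by intro i hi; simp at hi; omega, by simp⟩ : Composition t)} := by
    ext c
    simp only [Finset.mem_filter, Finset.mem_univ, true_and, Finset.mem_singleton]
    constructor
    · intro hc
      obtain ⟨a, ha⟩ := List.length_eq_one_iff.1 hc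
      have hsum := c.blocks_sum
      rw [ha] at hsum
      simp at hsum
      apply Composition.ext
      rw [ha, hsum]
    · rintro rfl
      rfl
  rw [hc, Finset.sum_singleton]
  simp

lemma Pha_two {t : ℕ} (ht : 1 ≤ t) :
    Pha k t 2 = ∑ j ∈ Finset.Icc 1 (t-1), ag' k j * ag' k (t - j) := by
  unfold Pha
  refine Finset.sum_bij' (fun c _ => c.blocks.headI)
    (fun j hj => (⟨[j, t - j], ?_, ?_⟩ : Composition t)) ?_ ?_ ?_ ?_ ?_
  · intro i hi
    have := Finset.mem_Icc.1 hj
    simp at hi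
    omega
  · have := Finset.mem_Icc.1 hj
    simp
    omega
  · intro c hc
    simp only [Finset.mem_filter, Finset.mem_univ, true_and] at hc
    obtain ⟨a, b, hab⟩ := List.length_eq_two.1 hc
    have hsum := c.blocks_sum
    have ha : 0 < a := c.blocks_pos (by rw [hab]; simp)
    have hb : 0 < b := c.blocks_pos (by rw [hab]; simp)
    rw [hab] at hsum
    simp at hsum
    show c.blocks.headI ∈ _
    rw [hab]
    simp only [List.headI]
    rw [Finset.mem_Icc]
    omega
  · intro j hj
    simp only [Finset.mem_filter, Finset.mem_univ, true_and]
    rfl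
  · intro c hc
    simp only [Finset.mem_filter, Finset.mem_univ, true_and] at hc
    obtain ⟨a, b, hab⟩ := List.length_eq_two.1 hc
    have hsum := c.blocks_sum
    rw [hab] at hsum
    simp at hsum
    apply Composition.ext
    show [c.blocks.headI, t - c.blocks.headI] = c.blocks
    rw [hab]
    simp only [List.headI]
    have : t - a = b := by omega
    rw [this]
  · intro j hj
    rfl
  · intro c hc
    simp only [Finset.mem_filter, Finset.mem_univ, true_and] at hc
    obtain ⟨a, b, hab⟩ := List.length_eq_two.1 hc
    have hsum := c.blocks_sum
    rw [hab] at hsum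
    simp at hsum
    show _ = ag' k c.blocks.headI * ag' k (t - c.blocks.headI)
    rw [hab]
    simp only [List.map, List.prod_cons, List.prod_nil, List.headI]
    have : t - a = b := by omega
    rw [this, mul_one]

lemma Qha_one {t : ℕ} (ht : 1 ≤ t) : Qha k t 1 = 2 • Pha k t 1 + Pha k t 2 := by
  unfold Qha
  rcases eq_or_lt_of_le ht with h1 | h2
  · rw [← h1]
    rw [show Finset.Icc 1 1 = {1} by rfl, Finset.sum_singleton]
    rw [show Pha k 1 2 = (0 : HA k) from Pha_eq_zero (by omega)]
    norm_num
  · have h2 : 2 ≤ t := h2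
    rw [← Finset.sum_subset (Finset.Icc_subset_Icc_right h2)]
    · rw [show Finset.Icc 1 2 = {1, 2} by rfl]
      rw [Finset.sum_insert (by decide), Finset.sum_singleton]
      norm_num
    · intro s hs hs2
      rw [Finset.mem_Icc] at hs hs2
      have : (2 : ℕ).choose s = 0 := Nat.choose_eq_zero_of_lt (by omega)
      rw [this, zero_smul]

end SectA
/-! ### Section B : filtration by alpha-monomials, vanishing half -/

/-- alpha-monomials of weight at most `n`. -/
def MsetA (n : ℕ) : Set (HA k) :=
  {x | ∃ L : List ℕ+, (L.map dminus).sum ≤ n ∧ x = (L.map (alphaE k)).prod}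

/-- The filtration submodule. -/
def GF (n : ℕ) : Submodule k (HA k) := Submodule.span k (MsetA k n)

/-- `H ⊗ P` inside `H ⊗ H`. -/
def RT (P : Submodule k (HA k)) : Submodule k (HA k ⊗[k] HA k) :=
  LinearMap.range (TensorProduct.map (LinearMap.id : HA k →ₗ[k] HA k) P.subtype)

section SectB
set_option linter.unusedSectionVars false
variable {k}

lemma tmul_mem_RT {P : Submodule k (HA k)} (u : HA k) {v : HA k} (hv : v ∈ P) :
    u ⊗ₜ[k] v ∈ RT k P :=
  ⟨u ⊗ₜ ⟨v, hv⟩, by simp⟩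

lemma RT_mono {P Q : Submodule k (HA k)} (h : P ≤ Q) : RT k P ≤ RT k Q := by
  rintro t ⟨s, rfl⟩
  induction s using TensorProduct.induction_on with
  | zero => simp [Submodule.zero_mem]
  | tmul u v => simpa using tmul_mem_RT u (h v.2)
  | add a b ha hb => rw [map_add]; exact Submodule.add_mem _ ha hb

lemma RT_mul {P Q : Submodule k (HA k)} {x y : HA k ⊗[k] HA k}
    (hx : x ∈ RT k P) (hy : y ∈ RT k Q) : x * y ∈ RT k (P * Q) := by
  obtain ⟨s, rfl⟩ := hx
  obtain ⟨t, rfl⟩ := hy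
  induction s using TensorProduct.induction_on with
  | zero => rw [map_zero, zero_mul]; exact Submodule.zero_mem _
  | tmul u v =>
    induction t using TensorProduct.induction_on with
    | zero => rw [map_zero, mul_zero]; exact Submodule.zero_mem _
    | tmul u' v' =>
      simp only [TensorProduct.map_tmul, LinearMap.id_coe, id_eq, Submodule.coe_subtype,
        Algebra.TensorProduct.tmul_mul_tmul]
      exact tmul_mem_RT _ (Submodule.mul_mem_mul v.2 v'.2)
    | add a b ha hb => rw [map_add, mul_add]; exact Submodule.add_mem _ ha hb
  | add a b ha hb => rw [map_add, add_mul]; exact Submodule.add_mem _ ha hb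

lemma GF_mono {m n : ℕ} (h : m ≤ n) : GF k m ≤ GF k n := by
  apply Submodule.span_mono
  rintro x ⟨L, hL, rfl⟩
  exact ⟨L, hL.trans h, rfl⟩

lemma one_mem_GF (n : ℕ) : (1 : HA k) ∈ GF k n :=
  Submodule.subset_span ⟨[], by simp, by simp⟩

lemma prodL_mem_GF (L : List ℕ+) : (L.map (alphaE k)).prod ∈ GF k ((L.map dminus).sum) :=
  Submodule.subset_span ⟨L, le_refl _, rfl⟩

lemma alphaE_mem_GF {r : ℕ+} {n : ℕ} (h : dminus r ≤ n) : alphaE k r ∈ GF k n :=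
  Submodule.subset_span ⟨[r], by simpa using h, by simp⟩

lemma GF_mul_le {p q : ℕ} : GF k p * GF k q ≤ GF k (p + q) := by
  rw [GF, GF, Submodule.span_mul_span]
  apply Submodule.span_le.2
  rintro x ⟨y, hy, z, hz, rfl⟩
  obtain ⟨L1, h1, rfl⟩ := hy
  obtain ⟨L2, h2, rfl⟩ := hz
  apply Submodule.subset_span
  exact ⟨L1 ++ L2, by rw [List.map_append, List.sum_append]; omega,
    by rw [List.map_append, List.prod_append]⟩

lemma GF_mul_mem {p q : ℕ} {x y : HA k} (hx : x ∈ GF k p) (hy : y ∈ GF k q) :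
    x * y ∈ GF k (p + q) :=
  GF_mul_le (Submodule.mul_mem_mul hx hy)

lemma alphaE_one : alphaE k 1 = ag k 1 := if_pos rfl

lemma one_le_dminus (r : ℕ+) : 1 ≤ dminus r := by
  obtain ⟨m, hm⟩ := r
  unfold dminus
  split
  · exact le_refl _
  · rename_i h
    have hm1 : m ≠ 1 := by
      intro hh
      exact h (by subst hh; rfl)
    show 1 ≤ m - 1
    omega

lemma a1pow_mem_GF (m : ℕ) : (ag k 1) ^ m ∈ GF k m := by
  apply Submodule.subset_span
  refine ⟨List.replicate m 1, ?_, ?_⟩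
  · simp [dminus]
  · rw [List.map_replicate, List.prod_replicate, alphaE_one]

lemma ag'_mem_GF {m : ℕ} (h : 1 ≤ m) : ag' k m ∈ GF k m := by
  rcases eq_or_lt_of_le h with h1 | h2
  · rw [← h1, ag'_eq (by omega)]
    have : (⟨1, by omega⟩ : ℕ+) = 1 := rfl
    erw [this, ← alphaE_one]
    exact alphaE_mem_GF (by simp [dminus])
  · have hm2 : 2 ≤ m := h2
    have hne : (⟨m, by omega⟩ : ℕ+) ≠ 1 := by
      intro hh
      have := congrArg (PNat.val) hh
      simp at this
      have h' : m = 1 := this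
      omega
    have : ag' k m = alphaE k ⟨m, by omega⟩ + (ag k 1) ^ m := by
      erw [alphaE, if_neg hne, ag'_eq (by omega : 0 < m)]
      exact (sub_add_cancel _ _).symm
    rw [this]
    refine Submodule.add_mem _ (alphaE_mem_GF ?_) (a1pow_mem_GF m)
    simp only [dminus, if_neg hne]
    split_ifs
    · omega
    · exact Nat.sub_le m 1

lemma agsub_mem_GF {m : ℕ} (h : 1 ≤ m) : ag' k m - (ag k 1) ^ m ∈ GF k (m - 1) := by
  rcases eq_or_lt_of_le h with h1 | h2
  · rw [← h1]
    simp only [pow_one, ag'_eq (by omega : (0:ℕ) < 1)]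
    have : (⟨1, by omega⟩ : ℕ+) = 1 := rfl
    erw [this, sub_self]
    exact Submodule.zero_mem _
  · have hm2 : 2 ≤ m := h2
    have hne : (⟨m, by omega⟩ : ℕ+) ≠ 1 := by
      intro hh
      have := congrArg (PNat.val) hh
      simp at this
      have h' : m = 1 := this
      omega
    have : ag' k m - (ag k 1) ^ m = alphaE k ⟨m, by omega⟩ := by
      erw [alphaE, if_neg hne, ag'_eq (by omega : 0 < m)]
      rfl
    rw [this]
    refine alphaE_mem_GF (le_of_eq ?_)
    simp only [dminus, if_neg hne]
    split_ifs with hh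
    · exact absurd hh hne
    · rfl


lemma aa_sub_mem {i j : ℕ} (hi : 1 ≤ i) (hj : 1 ≤ j) :
    ag' k i * ag' k j - (ag k 1) ^ (i + j) ∈ GF k (i + j - 1) := by
  have key : ag' k i * ag' k j - (ag k 1) ^ (i + j)
      = (ag' k i - (ag k 1) ^ i) * ag' k j + (ag k 1) ^ i * (ag' k j - (ag k 1) ^ j) := by
    rw [pow_add]
    noncomm_ring
  rw [key]
  refine Submodule.add_mem _ ?_ ?_
  · exact GF_mono (by omega) (GF_mul_mem (agsub_mem_GF hi) (ag'_mem_GF hj))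
  · exact GF_mono (by omega) (GF_mul_mem (a1pow_mem_GF i) (agsub_mem_GF hj))

lemma blocks_prod_mem_GF : ∀ (bl : List ℕ), (∀ b ∈ bl, 0 < b) →
    (bl.map (ag' k)).prod ∈ GF k bl.sum := by
  intro bl
  induction bl with
  | nil => intro _; simpa using one_mem_GF (k := k) 0
  | cons b bl ih =>
    intro h
    rw [List.map_cons, List.prod_cons, List.sum_cons]
    exact GF_mul_mem (ag'_mem_GF (h b (by simp))) (ih (fun x hx => h x (by simp [hx])))

lemma Pha_mem_GF (t s : ℕ) : Pha k t s ∈ GF k t := by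
  apply Submodule.sum_mem
  intro c _
  have := blocks_prod_mem_GF (k := k) c.blocks (fun b hb => c.blocks_pos hb)
  rwa [c.blocks_sum] at this

lemma Qha_mem_GF (t l : ℕ) : Qha k t l ∈ GF k t := by
  apply Submodule.sum_mem
  intro s _
  exact Submodule.smul_mem _ _ (Pha_mem_GF t s)

end SectB
section SectC
set_option linter.unusedSectionVars false
variable {k}

lemma sum_Icc_one {M : Type*} [AddCommMonoid M] (t : ℕ) (f : ℕ → M) :
    ∑ j ∈ Finset.Icc 1 t, f j = ∑ i ∈ Finset.range t, f (1+i) := by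
  rw [← Finset.Ico_add_one_right_eq_Icc, Finset.sum_Ico_eq_sum_range]
  simp

lemma Dha_a1 : Dha k (ag k 1) = ag k 1 ⊗ₜ[k] 1 + 1 ⊗ₜ[k] ag k 1 := by
  rw [Dha_ag]
  have : ((1:ℕ+):ℕ) - 1 = 0 := rfl
  rw [this, show Finset.Icc 1 0 = (∅ : Finset ℕ) from rfl, Finset.sum_empty, add_zero]

lemma commute_a1 : Commute (ag k 1 ⊗ₜ[k] (1:HA k)) ((1:HA k) ⊗ₜ[k] ag k 1) := by
  unfold Commute SemiconjBy
  simp [Algebra.TensorProduct.tmul_mul_tmul]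

lemma Dpow_raw (n : ℕ) : Dha k (ag k 1 ^ n)
    = ∑ i ∈ Finset.range (n+1), (n.choose i) • ((ag k 1 ^ i) ⊗ₜ[k] (ag k 1 ^ (n - i))) := by
  rw [map_pow, Dha_a1, commute_a1.add_pow]
  refine Finset.sum_congr rfl (fun i _ => ?_)
  rw [Algebra.TensorProduct.tmul_pow, Algebra.TensorProduct.tmul_pow,
    Algebra.TensorProduct.tmul_mul_tmul, one_pow, one_pow, one_mul, mul_one,
    nsmul_eq_mul]
  exact ((Nat.cast_commute (n.choose i) _).eq).symm

lemma Dpow_split {n : ℕ} (hn : 1 ≤ n) : Dha k (ag k 1 ^ n)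
    = (ag k 1 ^ n) ⊗ₜ[k] 1 + 1 ⊗ₜ[k] (ag k 1 ^ n)
      + ∑ i ∈ Finset.Icc 1 (n-1), (n.choose i) • ((ag k 1 ^ i) ⊗ₜ[k] (ag k 1 ^ (n-i))) := by
  obtain ⟨p, rfl⟩ : ∃ p, n = p + 1 := ⟨n-1, by omega⟩
  rw [Dpow_raw, Finset.sum_range_succ, Finset.sum_range_succ']
  have h1 : p + 1 - 1 = p := rfl
  rw [h1, sum_Icc_one]
  have h2 : ∀ i, 1 + i = i + 1 := fun i => Nat.add_comm 1 i
  rw [Finset.sum_congr rfl (fun i _ => by rw [h2 i] : ∀ i ∈ Finset.range p,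
    ((p+1).choose (1+i)) • ((ag k 1 ^ (1+i)) ⊗ₜ[k] (ag k 1 ^ (p+1-(1+i))))
      = ((p+1).choose (i+1)) • ((ag k 1 ^ (i+1)) ⊗ₜ[k] (ag k 1 ^ (p+1-(i+1)))))]
  rw [Nat.choose_self, Nat.choose_zero_right, one_smul, one_smul, Nat.sub_self, Nat.sub_zero,
    pow_zero]
  abel

lemma claim_core {n : ℕ} (hn : 2 ≤ n) :
    (∑ m ∈ Finset.Icc 1 (n-1), ag' k m ⊗ₜ[k] Qha k (n-m) m)
      - ∑ i ∈ Finset.Icc 1 (n-1), (n.choose i) • ((ag k 1 ^ i) ⊗ₜ[k] (ag k 1 ^ (n-i)))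
      ∈ RT k (GF k (n-2)) := by
  obtain ⟨p, rfl⟩ : ∃ p, n = p + 2 := ⟨n - 2, by omega⟩
  have h1 : p + 2 - 1 = p + 1 := rfl
  have h2 : p + 2 - 2 = p := rfl
  rw [h1, h2, sum_Icc_one, sum_Icc_one, ← Finset.sum_sub_distrib, Finset.sum_range_succ']
  have key : Qha k (p+1) 1 - (p+2) • (ag k 1 ^ (p+1)) ∈ GF k p := by
    rw [Qha_one (by omega), Pha_one (by omega), Pha_two (by omega)]
    have h3 : p + 1 - 1 = p := rfl
    rw [h3]
    have e2 : (2:ℕ) • ag' k (p+1) + (∑ j ∈ Finset.Icc 1 p, ag' k j * ag' k (p+1-j))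
        - ((p+2):ℕ) • (ag k 1 ^ (p+1))
        = (2:ℕ) • (ag' k (p+1) - ag k 1 ^ (p+1))
          + ∑ j ∈ Finset.Icc 1 p, (ag' k j * ag' k (p+1-j) - ag k 1 ^ (p+1)) := by
      rw [Finset.sum_sub_distrib, Finset.sum_const, Nat.card_Icc, smul_sub]
      have h4 : (p + 2) • (ag k 1 ^ (p+1))
          = (2:ℕ) • (ag k 1 ^ (p+1)) + (p + 1 - 1) • (ag k 1 ^ (p+1)) := by
        rw [← add_nsmul]
        congr 1
        omega
      rw [h4]
      abel
    rw [e2]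
    refine Submodule.add_mem _ ?_ (Submodule.sum_mem _ ?_)
    · exact Submodule.smul_mem _ _ (by simpa using agsub_mem_GF (k := k) (m := p+1) (by omega))
    · intro j hj
      rw [Finset.mem_Icc] at hj
      have hmem := aa_sub_mem (k := k) (i := j) (j := p+1-j) hj.1 (by omega)
      have h5 : j + (p+1-j) = p+1 := by omega
      rw [h5] at hmem
      exact GF_mono (by omega) hmem
  refine Submodule.add_mem _ (Submodule.sum_mem _ ?_) ?_
  · intro i _
    refine Submodule.sub_mem _ ?_ ?_
    · exact tmul_mem_RT _ (GF_mono (by omega) (Qha_mem_GF _ _))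
    · exact Submodule.smul_mem _ _ (tmul_mem_RT _ (GF_mono (by omega) (a1pow_mem_GF _)))
  · have e : ag' k (1+0) ⊗ₜ[k] Qha k (p+2-(1+0)) (1+0)
        - ((p+2).choose (1+0)) • ((ag k 1 ^ (1+0)) ⊗ₜ[k] (ag k 1 ^ (p+2-(1+0))))
        = ag k 1 ⊗ₜ[k] (Qha k (p+1) 1 - (p+2) • (ag k 1 ^ (p+1))) := by
      rw [TensorProduct.tmul_sub, TensorProduct.tmul_smul]
      have : ag' k (1+0) = ag k 1 := by rw [ag'_eq (by omega : 0 < 1+0)]; rfl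
      rw [this, Nat.choose_one_right, pow_one]
      rfl
    rw [e]
    exact tmul_mem_RT _ key

lemma claim_alphaE (r : ℕ+) :
    Dha k (alphaE k r) - alphaE k r ⊗ₜ[k] 1 - 1 ⊗ₜ[k] alphaE k r
      ∈ RT k (GF k (dminus r - 1)) := by
  by_cases hr : r = 1
  · subst hr
    rw [alphaE_one, Dha_a1]
    have : ag k 1 ⊗ₜ[k] (1:HA k) + 1 ⊗ₜ[k] ag k 1 - ag k 1 ⊗ₜ[k] 1 - 1 ⊗ₜ[k] ag k 1
        = 0 := by abel
    rw [this]
    exact Submodule.zero_mem _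
  · have hn : 2 ≤ (r:ℕ) := by
      obtain ⟨m, hm⟩ := r
      have : m ≠ 1 := fun hh => hr (by subst hh; rfl)
      show 2 ≤ m
      omega
    have hdm : dminus r - 1 = (r:ℕ) - 2 := by
      rw [dminus, if_neg hr]
      omega
    have halpha : alphaE k r = ag k r - ag k 1 ^ (r:ℕ) := by rw [alphaE, if_neg hr]
    have heq : Dha k (alphaE k r) - alphaE k r ⊗ₜ[k] 1 - 1 ⊗ₜ[k] alphaE k r
        = (∑ m ∈ Finset.Icc 1 ((r:ℕ)-1), ag' k m ⊗ₜ[k] Qha k ((r:ℕ)-m) m)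
          - ∑ i ∈ Finset.Icc 1 ((r:ℕ)-1),
              ((r:ℕ).choose i) • ((ag k 1 ^ i) ⊗ₜ[k] (ag k 1 ^ ((r:ℕ)-i))) := by
      rw [halpha, map_sub, Dha_ag, Dpow_split (by omega), TensorProduct.sub_tmul,
        TensorProduct.tmul_sub]
      abel
    rw [heq, hdm]
    exact claim_core hn

end SectC
section SectD
set_option linter.unusedSectionVars false
variable {k}

lemma wt_pos {L : List ℕ+} (h : L ≠ []) : 1 ≤ (L.map dminus).sum := by
  cases L with
  | nil => exact absurd rfl h
  | cons r L =>
    rw [List.map_cons, List.sum_cons]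
    have := one_le_dminus r
    omega

lemma tr_mem (r : ℕ+) : Dha k (alphaE k r) - 1 ⊗ₜ[k] alphaE k r
    ∈ RT k (GF k (dminus r - 1)) := by
  have e : Dha k (alphaE k r) - 1 ⊗ₜ[k] alphaE k r
      = (Dha k (alphaE k r) - alphaE k r ⊗ₜ[k] 1 - 1 ⊗ₜ[k] alphaE k r)
        + alphaE k r ⊗ₜ[k] 1 := by abel
  rw [e]
  exact Submodule.add_mem _ (claim_alphaE r) (tmul_mem_RT _ (one_mem_GF _))

lemma claim_list : ∀ (L : List ℕ+), L ≠ [] →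
    Dha k ((L.map (alphaE k)).prod) - 1 ⊗ₜ[k] (L.map (alphaE k)).prod
      ∈ RT k (GF k ((L.map dminus).sum - 1)) := by
  intro L
  induction L with
  | nil => intro h; exact absurd rfl h
  | cons r L ih =>
    intro _
    rcases eq_or_ne L [] with rfl | hL
    · simpa using tr_mem (k := k) r
    · have ihL := ih hL
      have hb1 : 1 ≤ (L.map dminus).sum := wt_pos hL
      have ha1 : 1 ≤ dminus r := one_le_dminus r
      simp only [List.map_cons, List.prod_cons, List.sum_cons]
      rw [map_mul]
      have key : Dha k (alphaE k r) * Dha k ((L.map (alphaE k)).prod)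
            - 1 ⊗ₜ[k] (alphaE k r * (L.map (alphaE k)).prod)
          = (1 ⊗ₜ[k] alphaE k r) * (Dha k ((L.map (alphaE k)).prod)
              - 1 ⊗ₜ[k] (L.map (alphaE k)).prod)
            + (Dha k (alphaE k r) - 1 ⊗ₜ[k] alphaE k r)
              * (1 ⊗ₜ[k] (L.map (alphaE k)).prod)
            + (Dha k (alphaE k r) - 1 ⊗ₜ[k] alphaE k r)
              * (Dha k ((L.map (alphaE k)).prod) - 1 ⊗ₜ[k] (L.map (alphaE k)).prod) := by
        have h1 : ((1:HA k) ⊗ₜ[k] alphaE k r) * (1 ⊗ₜ[k] (L.map (alphaE k)).prod)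
            = 1 ⊗ₜ[k] (alphaE k r * (L.map (alphaE k)).prod) := by
          rw [Algebra.TensorProduct.tmul_mul_tmul, one_mul]
        rw [← h1]
        simp only [mul_sub, sub_mul]
        abel
      rw [key]
      refine Submodule.add_mem _ (Submodule.add_mem _ ?_ ?_) ?_
      · have h2 := RT_mul (tmul_mem_RT (P := GF k (dminus r)) 1
          (alphaE_mem_GF (le_refl _))) ihL
        exact RT_mono (le_trans GF_mul_le (GF_mono (by omega))) h2
      · have h2 := RT_mul (tr_mem r) (tmul_mem_RT (P := GF k ((L.map dminus).sum)) 1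
          (prodL_mem_GF L))
        exact RT_mono (le_trans GF_mul_le (GF_mono (by omega))) h2
      · have h2 := RT_mul (tr_mem r) ihL
        exact RT_mono (le_trans GF_mul_le (GF_mono (by omega))) h2

lemma projH_one : projH k 1 = 0 := by
  rw [projH]
  simp

lemma deltaH_succ (n : ℕ) :
    deltaH k (n+1)
      = (TensorProduct.map (projH k) (deltaH k n)) ∘ₗ (Dha k).toLinearMap := by
  show (projPowH k (n+1)) ∘ₗ (DeltaH k (n+1)) = _
  show (TensorProduct.map (projH k) (projPowH k n)) ∘ₗ
      ((TensorProduct.map LinearMap.id (DeltaH k n)) ∘ₗ (Dha k).toLinearMap) = _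
  rw [← LinearMap.comp_assoc, ← TensorProduct.map_comp, LinearMap.comp_id]
  rfl

lemma deltaH_one_zero {m : ℕ} (hm : 1 ≤ m) : deltaH k m (1 : HA k) = 0 := by
  obtain ⟨n, rfl⟩ : ∃ n, m = n + 1 := ⟨m-1, by omega⟩
  rw [deltaH_succ]
  show TensorProduct.map (projH k) (deltaH k n) (Dha k 1) = 0
  rw [map_one, Algebra.TensorProduct.one_def, TensorProduct.map_tmul, projH_one,
    TensorProduct.zero_tmul]

lemma map_proj_RT {n : ℕ} {P : Submodule k (HA k)} (hP : ∀ x ∈ P, deltaH k n x = 0)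
    {t : HA k ⊗[k] HA k} (ht : t ∈ RT k P) :
    TensorProduct.map (projH k) (deltaH k n) t = 0 := by
  obtain ⟨s, rfl⟩ := ht
  have hcomp : (TensorProduct.map (projH k) (deltaH k n)) ∘ₗ
      (TensorProduct.map LinearMap.id P.subtype)
      = TensorProduct.map (projH k) ((deltaH k n) ∘ₗ P.subtype) := by
    rw [← TensorProduct.map_comp, LinearMap.comp_id]
  have hzero : (deltaH k n) ∘ₗ P.subtype = 0 := by
    apply LinearMap.ext
    intro x
    exact hP x.1 x.2
  rw [← LinearMap.comp_apply, hcomp, hzero]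
  induction s using TensorProduct.induction_on with
  | zero => simp
  | tmul u v => rw [TensorProduct.map_tmul, LinearMap.zero_apply, TensorProduct.tmul_zero]
  | add x y hx hy => rw [map_add, hx, hy, add_zero]

lemma delta_GF : ∀ (m n : ℕ), n < m → ∀ x ∈ GF k n, deltaH k m x = 0 := by
  intro m
  induction m with
  | zero => intro n hn; omega
  | succ m ihm =>
    intro n hn x hx
    refine Submodule.span_induction ?_ ?_ ?_ ?_ hx
    · rintro y ⟨L, hL, rfl⟩
      rcases eq_or_ne L [] with rfl | hne
      · have h1 : (List.map (alphaE k) ([] : List ℕ+)).prod = (1 : HA k) := by simp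
        rw [h1]
        exact deltaH_one_zero (by omega)
      · have hw := claim_list (k := k) L hne
        have hwt := wt_pos hne
        rw [deltaH_succ]
        show TensorProduct.map (projH k) (deltaH k m)
          (Dha k ((L.map (alphaE k)).prod)) = 0
        have e : Dha k ((L.map (alphaE k)).prod)
            = 1 ⊗ₜ[k] (L.map (alphaE k)).prod
              + (Dha k ((L.map (alphaE k)).prod)
                - 1 ⊗ₜ[k] (L.map (alphaE k)).prod) := by abel
        rw [e, map_add, TensorProduct.map_tmul, projH_one, TensorProduct.zero_tmul, zero_add]
        exact map_proj_RT (fun y hy => ihm ((L.map dminus).sum - 1) (by omega) y hy) hw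
    · exact map_zero _
    · intro a b _ _ ha hb; rw [map_add, ha, hb, add_zero]
    · intro c a _ ha; rw [map_smul, ha, smul_zero]

lemma vanish_half (r s : ℕ+) :
    deltaH k (dminus r + dminus s + 1) (alphaE k r * alphaE k s) = 0 := by
  have hmem : alphaE k r * alphaE k s ∈ GF k (dminus r + dminus s) :=
    Submodule.subset_span ⟨[r, s], by simp, by simp⟩
  exact delta_GF _ _ (by omega) _ hmem

end SectD
/-! ### Section E : finite-difference calculus over ℚ -/
namespace FDiffQ

def fd (f : ℕ → ℚ) : ℕ → ℚ := fun i => f (i+1) - f i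

lemma fd_apply (f : ℕ → ℚ) (x : ℕ) : fd f x = f (x+1) - f x := rfl

lemma fd_iter_add : ∀ (d : ℕ) (f g : ℕ → ℚ) (x : ℕ),
    fd^[d] (fun i => f i + g i) x = fd^[d] f x + fd^[d] g x := by
  intro d
  induction d with
  | zero => intro f g x; rfl
  | succ d ih =>
    intro f g x
    rw [Function.iterate_succ_apply, Function.iterate_succ_apply,
      Function.iterate_succ_apply]
    have e : fd (fun i => f i + g i) = fun i => fd f i + fd g i := by
      funext i; simp only [fd]; ring
    rw [e, ih]

lemma fd_iter_sub : ∀ (d : ℕ) (f g : ℕ → ℚ) (x : ℕ),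
    fd^[d] (fun i => f i - g i) x = fd^[d] f x - fd^[d] g x := by
  intro d
  induction d with
  | zero => intro f g x; rfl
  | succ d ih =>
    intro f g x
    rw [Function.iterate_succ_apply, Function.iterate_succ_apply,
      Function.iterate_succ_apply]
    have e : fd (fun i => f i - g i) = fun i => fd f i - fd g i := by
      funext i; simp only [fd]; ring
    rw [e, ih]

lemma fd_iter_const_mul : ∀ (d : ℕ) (c : ℚ) (f : ℕ → ℚ) (x : ℕ),
    fd^[d] (fun i => c * f i) x = c * fd^[d] f x := by
  intro d
  induction d with
  | zero => intro c f x; rfl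
  | succ d ih =>
    intro c f x
    rw [Function.iterate_succ_apply, Function.iterate_succ_apply]
    have e : fd (fun i => c * f i) = fun i => c * fd f i := by
      funext i; simp only [fd]; ring
    rw [e, ih]

lemma fd_iter_zero (d : ℕ) (x : ℕ) : fd^[d] (fun _ => (0:ℚ)) x = 0 := by
  induction d generalizing x with
  | zero => rfl
  | succ d ih =>
    rw [Function.iterate_succ_apply]
    have e : fd (fun _ => (0:ℚ)) = fun _ => (0:ℚ) := by
      funext i; simp [fd]
    rw [e]; exact ih x

lemma fd_iter_sum {ι : Type*} (S : Finset ι) :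
    ∀ (d : ℕ) (F : ι → ℕ → ℚ) (x : ℕ),
    fd^[d] (fun i => ∑ j ∈ S, F j i) x = ∑ j ∈ S, fd^[d] (F j) x := by
  intro d
  induction d with
  | zero => intro F x; rfl
  | succ d ih =>
    intro F x
    rw [Function.iterate_succ_apply]
    have e : fd (fun i => ∑ j ∈ S, F j i) = fun i => ∑ j ∈ S, fd (F j) i := by
      funext i
      simp only [fd]
      rw [← Finset.sum_sub_distrib]
    rw [e, ih (fun j => fd (F j)) x]
    exact Finset.sum_congr rfl (fun j _ => by rw [← Function.iterate_succ_apply])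

/-- Discrete Leibniz rule. -/
lemma fd_iter_mul : ∀ (n : ℕ) (f g : ℕ → ℚ) (x : ℕ),
    fd^[n] (fun i => f i * g i) x
      = ∑ j ∈ Finset.range (n+1),
          (n.choose j : ℚ) * (fd^[j] f (x + (n - j)) * fd^[n-j] g x) := by
  intro n
  induction n with
  | zero => intro f g x; simp
  | succ n ih =>
    intro f g x
    rw [Function.iterate_succ_apply']
    rw [fd_apply, ih, ih]
    have key : ∀ j ∈ Finset.range (n+1),
        (n.choose j : ℚ) * (fd^[j] f ((x+1) + (n - j)) * fd^[n-j] g (x+1))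
        - (n.choose j : ℚ) * (fd^[j] f (x + (n - j)) * fd^[n-j] g x)
        = (n.choose j : ℚ) * (fd^[j] f (x + (n+1-j)) * fd^[n+1-j] g x)
          + (n.choose j : ℚ) * (fd^[j+1] f (x + (n-j)) * fd^[n-j] g x) := by
      intro j hj
      rw [Finset.mem_range] at hj
      have h1 : (x+1) + (n-j) = x + (n+1-j) := by omega
      have h2 : fd^[n+1-j] g x = fd^[n-j] g (x+1) - fd^[n-j] g x := by
        rw [show n+1-j = (n-j)+1 by omega, Function.iterate_succ_apply', fd_apply]
      have h3 : fd^[j+1] f (x + (n-j)) = fd^[j] f (x + (n-j) + 1) - fd^[j] f (x + (n-j)) := by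
        rw [Function.iterate_succ_apply', fd_apply]
      have h4 : x + (n - j) + 1 = x + (n+1-j) := by omega
      rw [h1, h2, h3, h4]
      ring
    rw [← Finset.sum_sub_distrib, Finset.sum_congr rfl key, Finset.sum_add_distrib]
    -- handle second sum : terms C(n,j) * T(j+1)
    have hT : ∀ j ∈ Finset.range (n+1),
        (n.choose j : ℚ) * (fd^[j+1] f (x + (n-j)) * fd^[n-j] g x)
        = (n.choose j : ℚ) * (fd^[j+1] f (x + (n+1-(j+1))) * fd^[n+1-(j+1)] g x) := by
      intro j hj
      have : n + 1 - (j+1) = n - j := by omega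
      rw [this]
    rw [Finset.sum_congr rfl hT]
    -- RHS target: split with sum_range_succ'
    rw [Finset.sum_range_succ'
      (fun j => ((n+1).choose j : ℚ) * (fd^[j] f (x + (n+1-j)) * fd^[n+1-j] g x)) (n+1)]
    have hPascal : ∀ j ∈ Finset.range (n+1),
        (((n+1).choose (j+1) : ℕ) : ℚ) * (fd^[j+1] f (x + (n+1-(j+1))) * fd^[n+1-(j+1)] g x)
        = (n.choose j : ℚ) * (fd^[j+1] f (x + (n+1-(j+1))) * fd^[n+1-(j+1)] g x)
          + (n.choose (j+1) : ℚ) * (fd^[j+1] f (x + (n+1-(j+1))) * fd^[n+1-(j+1)] g x) := by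
      intro j hj
      rw [Nat.choose_succ_succ]
      push_cast
      ring
    rw [Finset.sum_congr rfl hPascal, Finset.sum_add_distrib]
    -- now: A + B = B' + (C + D) where matching up
    have hA : ∑ j ∈ Finset.range (n+1), (n.choose j : ℚ)
          * (fd^[j] f (x + (n+1-j)) * fd^[n+1-j] g x)
        = ∑ j ∈ Finset.range (n+1), (n.choose (j+1) : ℚ)
            * (fd^[j+1] f (x + (n+1-(j+1))) * fd^[n+1-(j+1)] g x)
          + ((n+1).choose 0 : ℚ) * (fd^[0] f (x + (n+1-0)) * fd^[n+1-0] g x) := by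
      rw [Finset.sum_range_succ
        (fun j => (n.choose (j+1) : ℚ) * (fd^[j+1] f (x + (n+1-(j+1))) * fd^[n+1-(j+1)] g x)) n]
      rw [Nat.choose_succ_self]
      push_cast
      rw [Finset.sum_range_succ'
        (fun j => (n.choose j : ℚ) * (fd^[j] f (x + (n+1-j)) * fd^[n+1-j] g x)) n]
      simp
    rw [hA]
    ring
end FDiffQ
namespace FDiffQ

def IsLead (d : ℕ) (f : ℕ → ℚ) (a : ℚ) : Prop := ∀ x, fd^[d] f x = a

def DegLt (d : ℕ) (f : ℕ → ℚ) : Prop := ∀ x, fd^[d] f x = 0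

lemma DegLt.mono {d e : ℕ} {f : ℕ → ℚ} (h : DegLt d f) (hde : d ≤ e) : DegLt e f := by
  intro x
  obtain ⟨c, rfl⟩ : ∃ c, e = c + d := ⟨e - d, by omega⟩
  rw [Function.iterate_add_apply]
  have hz : fd^[d] f = fun _ => (0:ℚ) := funext h
  rw [hz]
  exact fd_iter_zero c x

lemma IsLead.degLt {d : ℕ} {f : ℕ → ℚ} {a : ℚ} (h : IsLead d f a) : DegLt (d+1) f := by
  intro x
  rw [Function.iterate_succ_apply', fd_apply, h, h, sub_self]

lemma IsLead.degLt_of_le {d e : ℕ} {f : ℕ → ℚ} {a : ℚ} (h : IsLead d f a)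
    (hde : d + 1 ≤ e) : DegLt e f :=
  h.degLt.mono hde

lemma DegLt.isLead {d : ℕ} {f : ℕ → ℚ} (h : DegLt d f) : IsLead d f 0 := h

lemma IsLead.add {d : ℕ} {f g : ℕ → ℚ} {a b : ℚ} (hf : IsLead d f a) (hg : IsLead d g b) :
    IsLead d (fun i => f i + g i) (a + b) := by
  intro x
  rw [fd_iter_add, hf, hg]

lemma IsLead.sub {d : ℕ} {f g : ℕ → ℚ} {a b : ℚ} (hf : IsLead d f a) (hg : IsLead d g b) :
    IsLead d (fun i => f i - g i) (a - b) := by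
  intro x
  rw [fd_iter_sub, hf, hg]

lemma IsLead.const_mul {d : ℕ} {f : ℕ → ℚ} {a : ℚ} (c : ℚ) (hf : IsLead d f a) :
    IsLead d (fun i => c * f i) (c * a) := by
  intro x
  rw [fd_iter_const_mul, hf]

lemma IsLead.mul {p q : ℕ} {f g : ℕ → ℚ} {a b : ℚ} (hf : IsLead p f a) (hg : IsLead q g b) :
    IsLead (p+q) (fun i => f i * g i) (((p+q).choose p : ℚ) * (a * b)) := by
  intro x
  rw [fd_iter_mul]
  rw [Finset.sum_eq_single_of_mem p (by rw [Finset.mem_range]; omega)]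
  · rw [show p + q - p = q by omega, hf, hg]
  · intro j hj hjp
    rcases lt_or_gt_of_ne hjp with hlt | hgt
    · have hz : fd^[p+q-j] g x = 0 := (hg.degLt_of_le (by omega)) x
      rw [hz]; ring
    · rw [Finset.mem_range] at hj
      have hz : fd^[j] f (x + (p+q-j)) = 0 := (hf.degLt_of_le (by omega)) _
      rw [hz]; ring

lemma DegLt.mul {p q : ℕ} {f g : ℕ → ℚ} (hp : 1 ≤ p) (hq : 1 ≤ q)
    (hf : DegLt p f) (hg : DegLt q g) : DegLt (p+q-1) (fun i => f i * g i) := by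
  intro x
  rw [fd_iter_mul]
  apply Finset.sum_eq_zero
  intro j hj
  rcases le_or_gt p j with h | h
  · rw [(hf.mono h) _]; ring
  · have hz : fd^[p+q-1-j] g x = 0 := (hg.mono (by omega)) x
    rw [hz]; ring

lemma lead_pow : ∀ n : ℕ, IsLead n (fun i => (i:ℚ)^n) (n.factorial : ℚ) := by
  intro n
  induction n with
  | zero => intro x; simp
  | succ n ih =>
    have hid : IsLead 1 (fun i => (i:ℚ)) 1 := by
      intro x
      show fd (fun i => (i:ℚ)) x = 1
      rw [fd_apply]
      push_cast
      ring
    have hmul := ih.mul hid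
    have hfun : (fun i : ℕ => (i:ℚ)^n * (i:ℚ)) = fun i : ℕ => (i:ℚ)^(n+1) :=
      funext fun i => (pow_succ _ _).symm
    rw [hfun] at hmul
    have hval : (((n+1).choose n : ℕ) : ℚ) * ((n.factorial : ℚ) * 1)
        = ((n+1).factorial : ℚ) := by
      rw [Nat.choose_succ_self_right, Nat.factorial_succ]
      push_cast
      ring
    rw [hval] at hmul
    exact hmul

lemma degLt_pow (n : ℕ) : DegLt (n+1) (fun i => (i:ℚ)^n) := (lead_pow n).degLt

end FDiffQ
namespace FDiffQ

def cq : ℕ → ℕ → ℚ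
  | 0, _ => 0
  | (i+1), n =>
    if n = 1 then cq i 1 + 1
    else cq i n + 2 * cq i (n-1) + ∑ j ∈ Finset.Icc 1 (n-2), cq i j * cq i (n-1-j)

lemma cq_succ_one (i : ℕ) : cq (i+1) 1 = cq i 1 + 1 := by rw [cq]; simp

lemma cq_succ (i : ℕ) {n : ℕ} (hn : 2 ≤ n) : cq (i+1) n
    = cq i n + 2 * cq i (n-1) + ∑ j ∈ Finset.Icc 1 (n-2), cq i j * cq i (n-1-j) := by
  rw [cq, if_neg (by omega)]

lemma cq_one (i : ℕ) : cq i 1 = i := by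
  induction i with
  | zero => rfl
  | succ i ih => rw [cq_succ_one, ih]; push_cast; ring

def U (n : ℕ) : ℕ → ℚ := fun i => cq i n - (i:ℚ)^n

def UU (n : ℕ) : ℕ → ℚ := if n = 1 then (fun _ => 0) else U n

lemma UU_one : UU 1 = fun _ => (0:ℚ) := if_pos rfl

lemma cq_split (x : ℕ) {m : ℕ} (hm : 1 ≤ m) : cq x m = (x:ℚ)^m + UU m x := by
  by_cases h : m = 1
  · subst h
    rw [UU_one, cq_one]
    push_cast; ring
  · rw [UU, if_neg h, U]
    ring

lemma nonpos_mul_aux {c f a : ℚ} (hc : 0 ≤ c) (hf : 0 ≤ f) (ha : a ≤ 0) :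
    c * (f * a) ≤ 0 := by
  have h1 : 0 ≤ c * f := mul_nonneg hc hf
  have h2 : c * (f * a) = (c * f) * a := by ring
  rw [h2]
  exact mul_nonpos_iff.2 (Or.inl ⟨h1, ha⟩)

lemma IsLead.congr {d : ℕ} {f g : ℕ → ℚ} {a : ℚ} (h : IsLead d f a)
    (e : ∀ x, g x = f x) : IsLead d g a := by
  have : g = f := funext e
  rw [this]
  exact h

lemma fd_U (p : ℕ) : fd (U (p+2)) = fun x =>
    2 * UU (p+1) x
    + (∑ j ∈ Finset.Icc 1 p, ((x:ℚ)^j * UU (p+1-j) x + UU j x * (x:ℚ)^(p+1-j)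
        + UU j x * UU (p+1-j) x))
    - ∑ t ∈ Finset.range (p+1), (((p+2).choose t : ℕ) : ℚ) * (x:ℚ)^t := by
  funext x
  rw [fd_apply, U, U]
  have hrec : cq (x+1) (p+2) = cq x (p+2) + 2 * cq x (p+1)
      + ∑ j ∈ Finset.Icc 1 p, cq x j * cq x (p+1-j) := by
    rw [cq_succ x (by omega)]
    simp only [show p+2-1 = p+1 from rfl, show p+2-2 = p from rfl]
  have hbin : ((x+1 : ℕ):ℚ)^(p+2)
      = ∑ t ∈ Finset.range (p+3), (((p+2).choose t : ℕ):ℚ) * (x:ℚ)^t := by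
    push_cast
    rw [add_pow]
    refine Finset.sum_congr rfl (fun t ht => ?_)
    rw [one_pow]
    ring
  have hprod : ∀ j ∈ Finset.Icc 1 p, cq x j * cq x (p+1-j)
      = (x:ℚ)^(p+1) + ((x:ℚ)^j * UU (p+1-j) x + UU j x * (x:ℚ)^(p+1-j)
          + UU j x * UU (p+1-j) x) := by
    intro j hj
    rw [Finset.mem_Icc] at hj
    rw [cq_split x (by omega : 1 ≤ j), cq_split x (by omega : 1 ≤ p+1-j)]
    have hxx : (x:ℚ)^j * (x:ℚ)^(p+1-j) = (x:ℚ)^(p+1) := by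
      rw [← pow_add]
      congr 1
      omega
    calc ((x:ℚ)^j + UU j x) * ((x:ℚ)^(p+1-j) + UU (p+1-j) x)
        = (x:ℚ)^j * (x:ℚ)^(p+1-j) + ((x:ℚ)^j * UU (p+1-j) x
            + UU j x * (x:ℚ)^(p+1-j) + UU j x * UU (p+1-j) x) := by ring
      _ = _ := by rw [hxx]
  rw [hrec, Finset.sum_congr rfl hprod, Finset.sum_add_distrib, Finset.sum_const,
    Nat.card_Icc, cq_split x (by omega : 1 ≤ p+1), hbin]
  rw [Finset.sum_range_succ (fun t => (((p+2).choose t : ℕ):ℚ) * (x:ℚ)^t) (p+2)]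
  rw [Finset.sum_range_succ (fun t => (((p+2).choose t : ℕ):ℚ) * (x:ℚ)^t) (p+1)]
  rw [Nat.choose_self]
  have hch : (((p+2).choose (p+1) : ℕ) : ℚ) = (p : ℚ) + 2 := by
    have h1 : p + 1 = (p+2) - 1 := rfl
    rw [h1, Nat.choose_symm (by omega), Nat.choose_one_right]
    push_cast
    ring
  rw [hch]
  have hcard : (p + 1 - 1) • ((x:ℚ)^(p+1)) = (p:ℚ) * (x:ℚ)^(p+1) := by
    rw [show p + 1 - 1 = p from rfl, nsmul_eq_mul]
  rw [hcard]
  push_cast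
  ring

lemma U_lead : ∀ n : ℕ, 2 ≤ n → ∃ B : ℚ, B < 0 ∧ IsLead (n-1) (U n) B := by
  intro n
  induction n using Nat.strong_induction_on with
  | _ n ih =>
    intro hn
    obtain ⟨p, rfl⟩ : ∃ p, n = p + 2 := ⟨n-2, by omega⟩
    have hUU : ∀ m, 1 ≤ m → m ≤ p+1 → ∃ a : ℚ, a ≤ 0 ∧ IsLead (m-1) (UU m) a := by
      intro m h1 h2
      by_cases hm : m = 1
      · subst hm
        exact ⟨0, le_refl _, by rw [UU_one]; intro x; exact fd_iter_zero 0 x⟩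
      · obtain ⟨B, hB, hl⟩ := ih m (by omega) (by omega)
        exact ⟨B, le_of_lt hB, by rw [UU, if_neg hm]; exact hl⟩
    have hUUdeg : ∀ m, 1 ≤ m → m ≤ p+1 → DegLt m (UU m) := by
      intro m h1 h2
      obtain ⟨a, _, hl⟩ := hUU m h1 h2
      have h := hl.degLt
      rwa [Nat.sub_add_cancel h1] at h
    have hterm : ∀ j ∈ Finset.Icc 1 p, ∃ a : ℚ, a ≤ 0 ∧
        IsLead p (fun x => (x:ℚ)^j * UU (p+1-j) x + UU j x * (x:ℚ)^(p+1-j)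
          + UU j x * UU (p+1-j) x) a := by
      intro j hj
      rw [Finset.mem_Icc] at hj
      obtain ⟨a1, ha1, hl1⟩ := hUU (p+1-j) (by omega) (by omega)
      obtain ⟨a2, ha2, hl2⟩ := hUU j (by omega) (by omega)
      have hp1 := (lead_pow j).mul hl1
      rw [show j + (p+1-j-1) = p by omega] at hp1
      have hp2 := hl2.mul (lead_pow (p+1-j))
      rw [show j - 1 + (p+1-j) = p by omega] at hp2
      have hp3 : DegLt p (fun i => UU j i * UU (p+1-j) i) := by
        have h := DegLt.mul (by omega : 1 ≤ j) (by omega : 1 ≤ p+1-j)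
          (hUUdeg j (by omega) (by omega)) (hUUdeg (p+1-j) (by omega) (by omega))
        rwa [show j + (p+1-j) - 1 = p by omega] at h
      refine ⟨_, ?_, (hp1.add hp2).add hp3.isLead⟩
      have hv1 : ((p.choose j : ℕ):ℚ) * ((j.factorial:ℚ) * a1) ≤ 0 :=
        nonpos_mul_aux (by positivity) (by positivity) ha1
      have hv2 : ((p.choose (j-1) : ℕ):ℚ) * (a2 * ((p+1-j).factorial:ℚ)) ≤ 0 := by
        rw [mul_comm a2]
        exact nonpos_mul_aux (by positivity) (by positivity) ha2
      linarith
    -- gather the Icc sum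
    choose aF haF hlF using hterm
    have hsum : IsLead p (fun x => ∑ j ∈ Finset.Icc 1 p,
        ((x:ℚ)^j * UU (p+1-j) x + UU j x * (x:ℚ)^(p+1-j) + UU j x * UU (p+1-j) x))
        (∑ j ∈ (Finset.Icc 1 p).attach, aF j.1 j.2) := by
      intro x
      have e : (fun x : ℕ => ∑ j ∈ Finset.Icc 1 p,
          ((x:ℚ)^j * UU (p+1-j) x + UU j x * (x:ℚ)^(p+1-j) + UU j x * UU (p+1-j) x))
          = fun x : ℕ => ∑ j ∈ (Finset.Icc 1 p).attach,
            ((x:ℚ)^(j.1) * UU (p+1-j.1) x + UU j.1 x * (x:ℚ)^(p+1-j.1)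
              + UU j.1 x * UU (p+1-j.1) x) := by
        funext y
        rw [← Finset.sum_attach]
      rw [e, fd_iter_sum]
      exact Finset.sum_congr rfl (fun j _ => hlF j.1 j.2 x)
    have hsum_nonpos : (∑ j ∈ (Finset.Icc 1 p).attach, aF j.1 j.2) ≤ 0 :=
      Finset.sum_nonpos (fun j _ => haF j.1 j.2)
    -- first piece
    obtain ⟨a0, ha0, hl0⟩ := hUU (p+1) (by omega) (le_refl _)
    have h1 : IsLead p (fun x => 2 * UU (p+1) x) (2 * a0) := by
      have h := hl0.const_mul 2
      rwa [show p + 1 - 1 = p from rfl] at h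
    -- last piece
    have hlast : IsLead p (fun x => ∑ t ∈ Finset.range (p+1),
        (((p+2).choose t : ℕ):ℚ) * (x:ℚ)^t)
        ((((p+2).choose p : ℕ):ℚ) * (p.factorial:ℚ)) := by
      intro x
      rw [fd_iter_sum, Finset.sum_range_succ]
      have hz : ∀ t ∈ Finset.range p,
          fd^[p] (fun i : ℕ => (((p+2).choose t : ℕ):ℚ) * (i:ℚ)^t) x = 0 := by
        intro t ht
        rw [Finset.mem_range] at ht
        rw [fd_iter_const_mul]
        rw [((degLt_pow t).mono (by omega)) x, mul_zero]
      rw [Finset.sum_eq_zero hz, zero_add, fd_iter_const_mul, lead_pow p x]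
    have hcpos : (0:ℚ) < (((p+2).choose p : ℕ):ℚ) * (p.factorial:ℚ) := by
      have h1 : 0 < (p+2).choose p := Nat.choose_pos (by omega)
      have h2 : 0 < p.factorial := Nat.factorial_pos p
      positivity
    -- assemble
    have hfinal : IsLead (p+1) (U (p+2))
        ((2 * a0 + ∑ j ∈ (Finset.Icc 1 p).attach, aF j.1 j.2)
          - (((p+2).choose p : ℕ):ℚ) * (p.factorial:ℚ)) := by
      intro x
      rw [Function.iterate_succ_apply, fd_U]
      exact ((h1.add hsum).sub hlast) x
    exact ⟨_, by linarith, hfinal⟩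

end FDiffQ

def hseqQ (r : ℕ+) : ℕ → ℚ := fun i => if r = 1 then (i:ℚ) else FDiffQ.U (r:ℕ) i

lemma hseqQ_lead (r : ℕ+) : ∃ B : ℚ, B ≠ 0 ∧ FDiffQ.IsLead (dminus r) (hseqQ r) B := by
  by_cases hr : r = 1
  · subst hr
    refine ⟨1, one_ne_zero, ?_⟩
    rw [dminus, if_pos rfl]
    have e : hseqQ 1 = fun i : ℕ => (i:ℚ) := funext fun i => by simp [hseqQ]
    rw [e]
    intro x
    show FDiffQ.fd (fun i : ℕ => (i:ℚ)) x = 1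
    rw [FDiffQ.fd_apply]
    push_cast
    ring
  · have hr2 : 2 ≤ (r:ℕ) := by
      obtain ⟨m, hm⟩ := r
      have : m ≠ 1 := fun hh => hr (by subst hh; rfl)
      show 2 ≤ m
      omega
    obtain ⟨B, hB, hl⟩ := FDiffQ.U_lead (r:ℕ) hr2
    refine ⟨B, ne_of_lt hB, ?_⟩
    rw [dminus, if_neg hr]
    have e : hseqQ r = FDiffQ.U (r:ℕ) := funext fun i => by simp [hseqQ, hr]
    rw [e]
    exact hl
/-! ### Section F : characters -/

def psiH : HA k →ₐ[k] k := FreeAlgebra.lift k (fun n : ℕ+ => if n = 1 then (1:k) else 0)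

def gsH : ℕ → (HA k →ₐ[k] k)
  | 0 => Eha k
  | (i+1) => (Algebra.TensorProduct.lift (psiH k) (gsH i)
      (fun _ _ => Commute.all _ _)).comp (Dha k)

section SectF
set_option linter.unusedSectionVars false
variable {k}

open FDiffQ

lemma psiH_ag (n : ℕ+) : psiH k (ag k n) = if n = 1 then 1 else 0 := by
  rw [psiH, ag, FreeAlgebra.lift_ι_apply]

lemma psiH_ag' {m : ℕ} (hm : 1 ≤ m) : psiH k (ag' k m) = if m = 1 then 1 else 0 := by
  erw [ag'_eq (by omega), psiH_ag]
  by_cases h : m = 1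
  · subst h
    simp
  · rw [if_neg h, if_neg ?_]
    intro hh
    apply h
    have h2 := congrArg (fun x : ℕ+ => (x : ℕ)) hh
    simpa using h2

lemma Dha_ag' {n : ℕ} (hn : 1 ≤ n) : Dha k (ag' k n)
    = ag' k n ⊗ₜ[k] 1 + 1 ⊗ₜ[k] ag' k n
      + ∑ m ∈ Finset.Icc 1 (n - 1), ag' k m ⊗ₜ[k] Qha k (n - m) m := by
  erw [ag'_eq (by omega : 0 < n), Dha_ag]
  simp only [PNat.mk_coe]

lemma gs_Qha1 (i t : ℕ) (ht : 1 ≤ t) : gsH k i (Qha k t 1)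
    = 2 * (gsH k i (ag' k t))
      + ∑ j ∈ Finset.Icc 1 (t-1), gsH k i (ag' k j) * gsH k i (ag' k (t-j)) := by
  rw [Qha_one ht, Pha_one ht, Pha_two ht, map_add, map_sum]
  congr 1
  · rw [map_nsmul, nsmul_eq_mul]
    push_cast
    ring
  · exact Finset.sum_congr rfl (fun j _ => map_mul _ _ _)

lemma gs_ag : ∀ (i : ℕ) (n : ℕ), 1 ≤ n → gsH k i (ag' k n) = algebraMap ℚ k (cq i n) := by
  intro i
  induction i with
  | zero =>
    intro n hn
    show Eha k (ag' k n) = _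
    erw [ag'_eq (by omega), Eha_ag]
    show (0:k) = algebraMap ℚ k (cq 0 n)
    rw [show cq 0 n = 0 from rfl, map_zero]
  | succ i ih =>
    intro n hn
    show (Algebra.TensorProduct.lift (psiH k) (gsH k i)
      (fun _ _ => Commute.all _ _)) (Dha k (ag' k n)) = _
    rw [Dha_ag' hn, map_add, map_add, Algebra.TensorProduct.lift_tmul,
      Algebra.TensorProduct.lift_tmul, map_sum, map_one, map_one, mul_one, one_mul,
      psiH_ag' hn]
    have hterm : ∀ m ∈ Finset.Icc 1 (n-1),
        (Algebra.TensorProduct.lift (psiH k) (gsH k i) (fun _ _ => Commute.all _ _))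
          (ag' k m ⊗ₜ[k] Qha k (n-m) m)
        = if m = 1 then gsH k i (Qha k (n-1) 1) else 0 := by
      intro m hm
      rw [Finset.mem_Icc] at hm
      rw [Algebra.TensorProduct.lift_tmul, psiH_ag' (by omega)]
      by_cases h : m = 1
      · subst h
        rw [if_pos rfl, if_pos rfl, one_mul]
      · rw [if_neg h, if_neg h, zero_mul]
    rw [Finset.sum_congr rfl hterm]
    by_cases hn1 : n = 1
    · subst hn1
      rw [if_pos rfl]
      rw [show Finset.Icc 1 (1-1) = (∅ : Finset ℕ) from rfl, Finset.sum_empty, add_zero]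
      rw [ih 1 (le_refl 1), cq_succ_one, map_add, map_one]
      ring
    · have hn2 : 2 ≤ n := by omega
      rw [if_neg hn1]
      rw [Finset.sum_ite_eq' (Finset.Icc 1 (n-1)) 1 (fun _ => gsH k i (Qha k (n-1) 1))]
      rw [if_pos (by rw [Finset.mem_Icc]; omega)]
      rw [gs_Qha1 i (n-1) (by omega)]
      rw [ih (n-1) (by omega), ih n (by omega)]
      have hsum : ∑ j ∈ Finset.Icc 1 (n-1-1), gsH k i (ag' k j) * gsH k i (ag' k (n-1-j))
          = algebraMap ℚ k (∑ j ∈ Finset.Icc 1 (n-2), cq i j * cq i (n-1-j)) := by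
        rw [map_sum]
        have e : n - 1 - 1 = n - 2 := by omega
        rw [e]
        refine Finset.sum_congr rfl (fun j hj => ?_)
        rw [Finset.mem_Icc] at hj
        rw [ih j (by omega), ih (n-1-j) (by omega), map_mul]
      rw [hsum, cq_succ i hn2]
      rw [map_add, map_add, map_mul]
      rw [map_ofNat]
      ring
end SectF
/-! ### Section G : pairing of delta with characters, nonvanishing half -/

def PhiN : (n : ℕ) → (TpowH k n →ₗ[k] k)
  | 0 => LinearMap.id
  | (n+1) => (TensorProduct.lid k k).toLinearMap ∘ₗ
      TensorProduct.map (psiH k).toLinearMap (PhiN n)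

def lamN (n : ℕ) : HA k →ₗ[k] k := PhiN k n ∘ₗ deltaH k n

def convC (f g : HA k →ₗ[k] k) : HA k →ₗ[k] k :=
  (TensorProduct.lid k k).toLinearMap ∘ₗ
    (TensorProduct.map f g ∘ₗ (Dha k).toLinearMap)

def counitL : (HA k ⊗[k] HA k) →ₐ[k] HA k :=
  Algebra.TensorProduct.lift ((Algebra.ofId k (HA k)).comp (Eha k)) (AlgHom.id k (HA k))
    (fun x y => by
      show ((Algebra.ofId k (HA k)).comp (Eha k)) x * y
          = y * ((Algebra.ofId k (HA k)).comp (Eha k)) x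
      simp only [AlgHom.comp_apply, Algebra.ofId_apply]
      exact Algebra.commutes _ _)

section SectG
set_option linter.unusedSectionVars false
variable {k}
open FDiffQ

def fdK (f : ℕ → k) : ℕ → k := fun i => f (i+1) - f i

lemma fdK_cast : ∀ (N : ℕ) (f : ℕ → ℚ) (j : ℕ),
    fdK^[N] (fun i => algebraMap ℚ k (f i)) j = algebraMap ℚ k (fd^[N] f j) := by
  intro N
  induction N with
  | zero => intro f j; rfl
  | succ N ih =>
    intro f j
    rw [Function.iterate_succ_apply, Function.iterate_succ_apply]
    have e : fdK (fun i => algebraMap ℚ k (f i)) = fun i => algebraMap ℚ k (fd f i) := by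
      funext i
      show algebraMap ℚ k (f (i+1)) - algebraMap ℚ k (f i) = _
      rw [fd_apply, map_sub]
    rw [e, ih]

lemma lamN_succ (n : ℕ) : lamN k (n+1)
    = convC k ((psiH k).toLinearMap ∘ₗ projH k) (PhiN k n ∘ₗ deltaH k n) := by
  show PhiN k (n+1) ∘ₗ deltaH k (n+1) = _
  rw [deltaH_succ]
  show ((TensorProduct.lid k k).toLinearMap ∘ₗ
      TensorProduct.map (psiH k).toLinearMap (PhiN k n)) ∘ₗ
      (TensorProduct.map (projH k) (deltaH k n) ∘ₗ (Dha k).toLinearMap) = _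
  apply LinearMap.ext
  intro x
  show (TensorProduct.lid k k) ((TensorProduct.map (psiH k).toLinearMap (PhiN k n))
      ((TensorProduct.map (projH k) (deltaH k n)) (Dha k x)))
    = (TensorProduct.lid k k) ((TensorProduct.map ((psiH k).toLinearMap ∘ₗ projH k)
        (PhiN k n ∘ₗ deltaH k n)) (Dha k x))
  rw [TensorProduct.map_comp]
  rfl

lemma lid_map_apply (f g : HA k →ₗ[k] k) (u v : HA k) :
    (TensorProduct.lid k k) (TensorProduct.map f g (u ⊗ₜ[k] v)) = f u * g v := by
  rw [TensorProduct.map_tmul, TensorProduct.lid_tmul, smul_eq_mul]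

lemma convC_apply (f g : HA k →ₗ[k] k) (x : HA k) :
    convC k f g x = (TensorProduct.lid k k) (TensorProduct.map f g (Dha k x)) := rfl

lemma lid_map_sub_left (f f' g : HA k →ₗ[k] k) (t : HA k ⊗[k] HA k) :
    (TensorProduct.lid k k) (TensorProduct.map (f - f') g t)
      = (TensorProduct.lid k k) (TensorProduct.map f g t)
        - (TensorProduct.lid k k) (TensorProduct.map f' g t) := by
  induction t using TensorProduct.induction_on with
  | zero => simp
  | tmul u v =>
    rw [lid_map_apply, lid_map_apply, lid_map_apply, LinearMap.sub_apply, sub_mul]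
  | add a b ha hb =>
    rw [map_add, map_add, map_add, map_add, map_add, map_add, ha, hb]
    ring

lemma lid_map_sub_right (f g g' : HA k →ₗ[k] k) (t : HA k ⊗[k] HA k) :
    (TensorProduct.lid k k) (TensorProduct.map f (g - g') t)
      = (TensorProduct.lid k k) (TensorProduct.map f g t)
        - (TensorProduct.lid k k) (TensorProduct.map f g' t) := by
  induction t using TensorProduct.induction_on with
  | zero => simp
  | tmul u v =>
    rw [lid_map_apply, lid_map_apply, lid_map_apply, LinearMap.sub_apply, mul_sub]
  | add a b ha hb =>
    rw [map_add, map_add, map_add, map_add, map_add, map_add, ha, hb]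
    ring

lemma convC_sub_right (f g g' : HA k →ₗ[k] k) :
    convC k f (g - g') = convC k f g - convC k f g' := by
  apply LinearMap.ext
  intro x
  rw [LinearMap.sub_apply, convC_apply, convC_apply, convC_apply, lid_map_sub_right]

lemma Eha_ag' {m : ℕ} (hm : 1 ≤ m) : Eha k (ag' k m) = 0 := by
  erw [ag'_eq (by omega), Eha_ag]

lemma counitL_Dha : (counitL k).comp (Dha k) = AlgHom.id k (HA k) := by
  apply FreeAlgebra.hom_ext
  funext n
  show counitL k (Dha k (ag k n)) = ag k n
  rw [Dha_ag, map_add, map_add, map_sum]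
  have hz : ∀ m ∈ Finset.Icc 1 ((n:ℕ)-1),
      counitL k (ag' k m ⊗ₜ[k] Qha k ((n:ℕ)-m) m) = 0 := by
    intro m hm
    rw [Finset.mem_Icc] at hm
    rw [counitL, Algebra.TensorProduct.lift_tmul]
    simp only [AlgHom.comp_apply, Algebra.ofId_apply, AlgHom.coe_id, id_eq]
    rw [Eha_ag' (by omega), map_zero, zero_mul]
  rw [Finset.sum_congr rfl hz, Finset.sum_const, smul_zero, add_zero]
  rw [counitL, Algebra.TensorProduct.lift_tmul, Algebra.TensorProduct.lift_tmul]
  simp only [AlgHom.comp_apply, Algebra.ofId_apply, AlgHom.coe_id, id_eq]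
  rw [Eha_ag, map_zero, zero_mul, map_one, map_one, one_mul, zero_add]

lemma lid_map_counit (g : HA k →ₗ[k] k) (t : HA k ⊗[k] HA k) :
    (TensorProduct.lid k k) (TensorProduct.map (Eha k).toLinearMap g t)
      = g (counitL k t) := by
  induction t using TensorProduct.induction_on with
  | zero => simp
  | tmul u v =>
    rw [lid_map_apply]
    rw [counitL, Algebra.TensorProduct.lift_tmul]
    simp only [AlgHom.comp_apply, Algebra.ofId_apply, AlgHom.coe_id, id_eq,
      AlgHom.toLinearMap_apply]
    rw [← Algebra.smul_def, map_smul, smul_eq_mul]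
  | add a b ha hb =>
    rw [map_add, map_add, map_add, map_add, ha, hb]

lemma convC_counit (g : HA k →ₗ[k] k) : convC k (Eha k).toLinearMap g = g := by
  apply LinearMap.ext
  intro x
  rw [convC_apply, lid_map_counit]
  have h := congrArg (fun (F : HA k →ₐ[k] HA k) => F x) (counitL_Dha (k := k))
  simp only [AlgHom.comp_apply, AlgHom.coe_id, id_eq] at h
  rw [h]

lemma psi_proj : (psiH k).toLinearMap ∘ₗ projH k
    = (psiH k).toLinearMap - (Eha k).toLinearMap := by
  apply LinearMap.ext
  intro x
  show psiH k (projH k x) = psiH k x - Eha k x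
  have hp : projH k x = x - (algebraMap k (HA k)) (Eha k x) := rfl
  rw [hp, map_sub, AlgHom.commutes]
  simp

lemma convC_psi_proj (g : HA k →ₗ[k] k) :
    convC k ((psiH k).toLinearMap ∘ₗ projH k) g
      = convC k (psiH k).toLinearMap g - g := by
  rw [psi_proj]
  apply LinearMap.ext
  intro x
  rw [LinearMap.sub_apply, convC_apply, convC_apply, lid_map_sub_left]
  have h2 : (TensorProduct.lid k k) (TensorProduct.map (Eha k).toLinearMap g (Dha k x))
      = g x := by
    rw [lid_map_counit]
    have h := congrArg (fun (F : HA k →ₐ[k] HA k) => F x) (counitL_Dha (k := k))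
    simp only [AlgHom.comp_apply, AlgHom.coe_id, id_eq] at h
    rw [h]
  rw [h2]

lemma conv_gs (i : ℕ) : convC k (psiH k).toLinearMap (gsH k i).toLinearMap
    = (gsH k (i+1)).toLinearMap := by
  apply LinearMap.ext
  intro x
  rw [convC_apply]
  show _ = (Algebra.TensorProduct.lift (psiH k) (gsH k i)
      (fun _ _ => Commute.all _ _)) (Dha k x)
  generalize (Dha k x) = t
  induction t using TensorProduct.induction_on with
  | zero => simp
  | tmul u v =>
    rw [lid_map_apply, Algebra.TensorProduct.lift_tmul]
    rfl
  | add a b ha hb =>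
    rw [map_add, map_add, map_add, ha, hb]

def Pstep : (HA k →ₗ[k] k) → (HA k →ₗ[k] k) :=
  fun g => convC k ((psiH k).toLinearMap ∘ₗ projH k) g

lemma iter_bridge : ∀ (N : ℕ) (F : ℕ → (HA k →ₗ[k] k)),
    (∀ i, convC k (psiH k).toLinearMap (F i) = F (i+1)) → ∀ (j : ℕ) (x : HA k),
    ((Pstep (k := k))^[N] (F j)) x = fdK^[N] (fun i => F i x) j := by
  intro N
  induction N with
  | zero => intro F hF j x; rfl
  | succ N ih =>
    intro F hF j x
    rw [Function.iterate_succ_apply]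
    have h1 : Pstep (k := k) (F j) = F (j+1) - F j := by
      show convC k _ (F j) = _
      rw [convC_psi_proj, hF j]
    rw [h1]
    have hF' : ∀ i, convC k (psiH k).toLinearMap (F (i+1) - F i) = F (i+1+1) - F (i+1) := by
      intro i
      rw [convC_sub_right, hF, hF]
    have h2 := ih (fun i => F (i+1) - F i) hF' j x
    rw [h2, Function.iterate_succ_apply]
    congr 1

lemma lamN_iter (N : ℕ) : lamN k N = (Pstep (k := k))^[N] ((gsH k 0).toLinearMap) := by
  induction N with
  | zero =>
    apply LinearMap.ext
    intro x
    rfl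
  | succ N ih =>
    rw [lamN_succ]
    show Pstep (k := k) (PhiN k N ∘ₗ deltaH k N) = _
    have : PhiN k N ∘ₗ deltaH k N = lamN k N := rfl
    rw [this, ih]
    exact (Function.iterate_succ_apply' _ N _).symm

lemma lamN_val (N : ℕ) (x : HA k) :
    lamN k N x = fdK^[N] (fun i => gsH k i x) 0 := by
  rw [lamN_iter]
  exact iter_bridge N (fun i => (gsH k i).toLinearMap) (fun i => conv_gs i) 0 x

lemma gs_alphaE (i : ℕ) (r : ℕ+) :
    gsH k i (alphaE k r) = algebraMap ℚ k (hseqQ r i) := by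
  by_cases hr : r = 1
  · subst hr
    rw [alphaE_one]
    have h := gs_ag (k := k) i 1 (le_refl 1)
    rw [ag'_eq (by omega : 0 < 1)] at h
    rw [show (⟨1, by omega⟩ : ℕ+) = 1 from rfl] at h
    erw [h, cq_one]
    simp [hseqQ]
  · have hr2 : 2 ≤ (r:ℕ) := by
      obtain ⟨m, hm⟩ := r
      have : m ≠ 1 := fun hh => hr (by subst hh; rfl)
      show 2 ≤ m
      omega
    rw [alphaE, if_neg hr, map_sub, map_pow]
    have h1 : gsH k i (ag k r) = algebraMap ℚ k (cq i (r:ℕ)) := by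
      have h := gs_ag (k := k) i (r:ℕ) (by omega)
      rwa [ag'_eq (by omega), show (⟨(r:ℕ), by omega⟩ : ℕ+) = r from PNat.coe_injective rfl]
        at h
    have h2 : gsH k i (ag k 1) = algebraMap ℚ k (cq i 1) := by
      have h := gs_ag (k := k) i 1 (le_refl 1)
      rwa [ag'_eq (by omega : 0 < 1), show (⟨1, by omega⟩ : ℕ+) = 1 from rfl] at h
    rw [h1, h2, cq_one, ← map_pow, ← map_sub]
    have : hseqQ r i = cq i (r:ℕ) - (i:ℚ)^(r:ℕ) := by
      rw [hseqQ, if_neg hr]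
      rfl
    rw [this]

theorem nonvanish (r s : ℕ+) :
    deltaH k (dminus r + dminus s) (alphaE k r * alphaE k s) ≠ 0 := by
  intro h0
  obtain ⟨Br, hBr, hlr⟩ := hseqQ_lead r
  obtain ⟨Bs, hBs, hls⟩ := hseqQ_lead s
  have hprod := hlr.mul hls
  have hzero : lamN k (dminus r + dminus s) (alphaE k r * alphaE k s) = 0 := by
    show PhiN k _ (deltaH k _ _) = 0
    rw [h0, map_zero]
  rw [lamN_val] at hzero
  have hfun : (fun i => gsH k i (alphaE k r * alphaE k s))
      = fun i => algebraMap ℚ k (hseqQ r i * hseqQ s i) := by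
    funext i
    rw [map_mul, gs_alphaE, gs_alphaE, ← map_mul]
  rw [hfun, fdK_cast] at hzero
  have hval := hprod 0
  rw [hval] at hzero
  have hne : (((dminus r + dminus s).choose (dminus r) : ℕ) : ℚ) * (Br * Bs) ≠ 0 := by
    have hc : 0 < (dminus r + dminus s).choose (dminus r) := Nat.choose_pos (by omega)
    exact mul_ne_zero (Nat.cast_ne_zero.mpr (by omega)) (mul_ne_zero hBr hBs)
  exact hne ((algebraMap ℚ k).injective (hzero.trans (map_zero (algebraMap ℚ k)).symm))

end SectG

/-- For all positive integers `r, s` (equal or not), the product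
`α_r·α_s` satisfies `δ_{∂_-(r)+∂_-(s)+1}(α_r·α_s) = 0` and
`δ_{∂_-(r)+∂_-(s)}(α_r·α_s) ≠ 0`. -/
theorem stmt15 (r s : ℕ+) :
    deltaH k (dminus r + dminus s + 1) (alphaE k r * alphaE k s) = 0 ∧
    deltaH k (dminus r + dminus s) (alphaE k r * alphaE k s) ≠ 0 := by
  exact ⟨vanish_half r s, nonvanish r s⟩
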